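/- arXiv:2008.08070 — 4 statements merged into one kernel-verified Lean document; each statement's English description precedes it below -/
import Mathlib

section
/- Let $p$ be a prime and $R$ a normal domain with algebraically closed fraction field in which $p \neq 0$. Then there exists $\pi \in R$ with $\pi^p = p$, and the Frobenius map $x \mapsto x^p$ induces a bijection $R/\pi R \to R/pR$. Consequently the $p$-adic completion of $R$ is a perfectoid ring. -/
universe u

/-- The elementwise formulation that the Frobenius `x ↦ x ^ p` induces a bijection
`S/πS → S/pS`: surjectivity and injectivity of the induced map. -/
def FrobeniusBijective (p : ℕ) {S : Type u} [CommRing S] (π : S) : Prop :=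
  (∀ x : S, ∃ y : S, x - y ^ p ∈ Ideal.span {(p : S)}) ∧
  (∀ x : S, x ^ p ∈ Ideal.span {(p : S)} → x ∈ Ideal.span {π})

/-- The definition of a perfectoid ring taken in the context of Statement 9. -/
def IsPerfectoidOfPrime (p : ℕ) (S : Type u) [CommRing S] : Prop :=
  ∃ π : S, (∃ u : Sˣ, π ^ p = (p : S) * u) ∧ FrobeniusBijective p π

/-!
Every element of `R` has a `p`-th root in `R`: one exists in the algebraically closed fraction
field and is integral over `R`. Taking `π` a `p`-th root of `p`, Frobenius `R/π → R/p` is onto,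
and if `p ∣ x ^ p`, say `x ^ p = p s ^ p = (π s) ^ p`, then `π s ∣ x` because `R` is integrally
closed. Both properties only involve `R/p` and `R/π`, so they pass to the `p`-adic completion
`R^`, whose quotient `R^/pR^` is `R/pR` because `(p)` is finitely generated.
-/

theorem IsIntegrallyClosed.exists_pow_eq {R K : Type*} [CommRing R] [IsIntegrallyClosed R]
    [Field K] [Algebra R K] [IsFractionRing R K] [IsAlgClosed K]
    {n : ℕ} (hn : n ≠ 0) (a : R) : ∃ b : R, b ^ n = a := by
  obtain ⟨t, ht⟩ := IsAlgClosed.exists_pow_nat_eq (algebraMap R K a) (Nat.pos_of_ne_zero hn)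
  have ht_int : IsIntegral R t :=
    .of_pow (Nat.pos_of_ne_zero hn) (ht ▸ isIntegral_algebraMap)
  obtain ⟨b, rfl⟩ := (isIntegral_iff (K := K)).mp ht_int
  exact ⟨b, IsFractionRing.injective R K (by rw [map_pow, ht])⟩

theorem IsIntegrallyClosed.dvd_of_pow_eq_of_dvd_pow {R K : Type*} [CommRing R] [IsDomain R]
    [IsIntegrallyClosed R] [Field K] [Algebra R K] [IsFractionRing R K] [IsAlgClosed K]
    {n : ℕ} (hn : n ≠ 0) {π c x : R} (hπ : π ^ n = c) (hx : c ∣ x ^ n) : π ∣ x := by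
  obtain ⟨t, ht⟩ := hx
  obtain ⟨s, rfl⟩ := exists_pow_eq (K := K) hn t
  have h : (π * s) ^ n ∣ x ^ n := ⟨1, by rw [mul_pow, hπ, ht, mul_one]⟩
  exact dvd_of_mul_right_dvd ((pow_dvd_pow_iff hn).mp h)

theorem frobeniusBijective_of_isAlgClosed {R : Type u} (K : Type*) [CommRing R] [IsDomain R]
    [IsIntegrallyClosed R] [Field K] [Algebra R K] [IsFractionRing R K] [IsAlgClosed K]
    {p : ℕ} (hp : p ≠ 0) {π : R} (hπ : π ^ p = p) : FrobeniusBijective p π := by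
  refine ⟨fun x ↦ ?_, fun x hx ↦ ?_⟩
  · obtain ⟨y, rfl⟩ := IsIntegrallyClosed.exists_pow_eq (K := K) hp x
    exact ⟨y, by simp⟩
  · rw [Ideal.mem_span_singleton] at hx ⊢
    exact IsIntegrallyClosed.dvd_of_pow_eq_of_dvd_pow (K := K) hp hπ hx

theorem FrobeniusBijective.map {p : ℕ} {R S : Type u} [CommRing R] [CommRing S] (f : R →+* S)
    (hsurj : ∀ x : S, ∃ r : R, x - f r ∈ Ideal.span {(p : S)})
    (hinj : ∀ r : R, f r ∈ Ideal.span {(p : S)} → r ∈ Ideal.span {(p : R)})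
    {π : R} (hπp : π ∣ p) (h : FrobeniusBijective p π) : FrobeniusBijective p (f π) := by
  have hp_le : Ideal.span {(p : S)} ≤ Ideal.span {f π} := by
    rw [Ideal.span_singleton_le_span_singleton, ← map_natCast f]
    exact map_dvd f hπp
  have hmap : ∀ r ∈ Ideal.span {(p : R)}, f r ∈ Ideal.span {(p : S)} := by
    intro r hr
    rw [Ideal.mem_span_singleton] at hr ⊢
    simpa using map_dvd f hr
  refine ⟨fun x ↦ ?_, fun x hx ↦ ?_⟩
  · obtain ⟨r, hr⟩ := hsurj x
    obtain ⟨y, hy⟩ := h.1 r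
    refine ⟨f y, ?_⟩
    have hsum := add_mem hr (hmap _ hy)
    rwa [map_sub, map_pow, sub_add_sub_cancel] at hsum
  · obtain ⟨r, hr⟩ := hsurj x
    have hpow : f (r ^ p) ∈ Ideal.span {(p : S)} := by
      have hxr : Ideal.Quotient.mk _ x = Ideal.Quotient.mk _ (f r) := Ideal.Quotient.eq.mpr hr
      rwa [← Ideal.Quotient.eq_zero_iff_mem, map_pow, map_pow, ← hxr, ← map_pow,
        Ideal.Quotient.eq_zero_iff_mem]
    have hπr : f π ∣ f r := map_dvd f (Ideal.mem_span_singleton.mp (h.2 r (hinj _ hpow)))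
    rw [← sub_add_cancel x (f r)]
    exact add_mem (hp_le hr) (Ideal.mem_span_singleton.mpr hπr)

namespace AdicCompletion

variable {R : Type*} [CommRing R] {I : Ideal R}

theorem exists_sub_algebraMap_mem_map (hI : I.FG) (x : AdicCompletion I R) :
    ∃ r : R, x - algebraMap R _ r ∈ I.map (algebraMap R (AdicCompletion I R)) := by
  obtain ⟨r, hr⟩ := Ideal.Quotient.mk_surjective (evalOneₐ I x)
  refine ⟨r, ?_⟩
  rw [← ker_evalOneₐ_eq_map I hI, RingHom.mem_ker]
  simp [hr]

theorem comap_map_algebraMap (hI : I.FG) :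
    (I.map (algebraMap R (AdicCompletion I R))).comap (algebraMap R _) = I := by
  rw [← ker_evalOneₐ_eq_map I hI, RingHom.comap_ker, evalOneₐ_comp_algebraMap_eq_mk,
    Ideal.mk_ker]

end AdicCompletion

theorem frobenius_bijective_and_completion_perfectoid_general
    (p : ℕ) (hp : p.Prime)
    (R : Type u) [CommRing R] [IsDomain R] [IsIntegrallyClosed R]
    [IsAlgClosed (FractionRing R)] :
    (∃ π : R, π ^ p = (p : R) ∧ FrobeniusBijective p π) ∧
    IsPerfectoidOfPrime p (AdicCompletion (Ideal.span {(p : R)}) R) := by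
  obtain ⟨π, hπ⟩ := IsIntegrallyClosed.exists_pow_eq (K := FractionRing R) hp.ne_zero (p : R)
  have hR : FrobeniusBijective p π :=
    frobeniusBijective_of_isAlgClosed (FractionRing R) hp.ne_zero hπ
  let I := Ideal.span {(p : R)}
  have hI : I.FG := Submodule.fg_span_singleton _
  have hIp :
      I.map (algebraMap R (AdicCompletion I R)) = Ideal.span {(p : AdicCompletion I R)} := by
    rw [Ideal.map_span, Set.image_singleton, map_natCast]
  refine ⟨⟨π, hπ, hR⟩, algebraMap R _ π,
    ⟨1, by rw [Units.val_one, mul_one, ← map_pow, hπ, map_natCast]⟩,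
    hR.map _ (fun x ↦ ?_) (fun r hr ↦ ?_) (hπ ▸ dvd_pow_self π hp.ne_zero)⟩
  · exact hIp ▸ AdicCompletion.exists_sub_algebraMap_mem_map hI x
  · exact (AdicCompletion.comap_map_algebraMap hI).le (by rwa [Ideal.mem_comap, hIp])

theorem frobenius_bijective_and_completion_perfectoid
    (p : ℕ) (hp : p.Prime)
    (R : Type u) [CommRing R] [IsDomain R] [IsIntegrallyClosed R]
    [IsAlgClosed (FractionRing R)] (hpR : (p : R) ≠ 0) :
    (∃ π : R, π ^ p = (p : R) ∧ FrobeniusBijective p π) ∧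
    IsPerfectoidOfPrime p (AdicCompletion (Ideal.span {(p : R)}) R) :=
  frobenius_bijective_and_completion_perfectoid_general p hp R
end

section
/- Let $K \to L$ be a finite extension of fields of characteristic $0$, and $L \to M$ a further finite field extension. Then there exists a finite field extension $K \to E$ such that the $L$-algebra $E \otimes_K L$ decomposes as a finite product $\prod_{i=1}^n M_i$ of fields, where each extension $L \to M_i$ factors through $L \to M$ (i.e., admits an $L$-embedding $M \to M_i$). -/
/-!
Take for `E` the normal closure of `M` over `K`. Since `E/K` is separable, `L ⊗[K] E` is a reduced
Artinian ring, hence the product of its residue fields `Mᵢ`. Each `Mᵢ` receives `E` over `K`, so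
the minimal polynomial over `K` of every element of `M` splits in `Mᵢ`; a fortiori so does its
minimal polynomial over `L`, and therefore `M` embeds into `Mᵢ` over `L`.
-/

universe u

open scoped TensorProduct

section Embedding

variable {K L M F : Type*} [Field K] [Field L] [Field M] [Field F]

theorem minpoly_map_splits_of_normal {E : Type*} [Field E] [Algebra K M] [Algebra K E]
    [Algebra K F] [Normal K E] (f : M →ₐ[K] E) (g : E →ₐ[K] F) (x : M) :
    ((minpoly K x).map (algebraMap K F)).Splits := by
  have hE := Normal.splits ‹_› (f x)
  rw [minpoly.algHom_eq f f.injective] at hE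
  rw [← g.comp_algebraMap, ← Polynomial.map_map]
  exact hE.map g.toRingHom

variable [Algebra K L] [Algebra L M] [Algebra K M] [IsScalarTower K L M]
  [Algebra L F] [Algebra K F] [IsScalarTower K L F]

theorem nonempty_algHom_of_forall_minpoly_base_splits [Algebra.IsIntegral K M]
    (h : ∀ x : M, ((minpoly K x).map (algebraMap K F)).Splits) : Nonempty (M →ₐ[L] F) := by
  refine IntermediateField.nonempty_algHom_of_splits fun x ↦
    ⟨(Algebra.IsIntegral.isIntegral (R := K) x).tower_top, ?_⟩
  have hK : (((minpoly K x).map (algebraMap K L)).map (algebraMap L F)).Splits := by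
    rw [Polynomial.map_map, ← IsScalarTower.algebraMap_eq]
    exact h x
  have hne : (minpoly K x).map (algebraMap K L) ≠ 0 :=
    Polynomial.map_ne_zero (minpoly.ne_zero (Algebra.IsIntegral.isIntegral (R := K) x))
  exact hK.of_dvd (Polynomial.map_ne_zero hne)
    (Polynomial.map_dvd _ (minpoly.dvd_map_of_isScalarTower K L x))

end Embedding

theorem IsArtinianRing.exists_algEquiv_pi_fin (L A : Type*) [CommRing L] [CommRing A]
    [Algebra L A] [IsReduced A] [IsArtinianRing A] :
    ∃ (n : ℕ) (m : Fin n → MaximalSpectrum A), Nonempty (A ≃ₐ[L] ∀ i, A ⧸ (m i).asIdeal) := by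
  have := Fintype.ofFinite (MaximalSpectrum A)
  let e := (Fintype.equivFin (MaximalSpectrum A)).symm
  exact ⟨_, e, ⟨((IsArtinianRing.equivPi A).restrictScalars L).trans
    (AlgEquiv.piCongrLeft L (fun I : MaximalSpectrum A ↦ A ⧸ I.asIdeal) e).symm⟩⟩

theorem exists_finite_extension_tensor_decomposes
    (K L M : Type u) [Field K] [Field L] [Field M]
    [CharZero K] [Algebra K L] [FiniteDimensional K L]
    [Algebra L M] [FiniteDimensional L M] :
    ∃ (E : Type u) (_ : Field E) (_ : Algebra K E), FiniteDimensional K E ∧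
      ∃ (n : ℕ) (Mi : Fin n → Type u) (_ : ∀ i, Field (Mi i)) (_ : ∀ i, Algebra L (Mi i)),
        Nonempty ((L ⊗[K] E) ≃ₐ[L] ((i : Fin n) → Mi i)) ∧
        ∀ i, Nonempty (M →ₐ[L] Mi i) := by
  let : Algebra K M := ((algebraMap L M).comp (algebraMap K L)).toAlgebra
  have : IsScalarTower K L M := .of_algebraMap_eq' rfl
  have : FiniteDimensional K M := .trans K L M
  let E := IntermediateField.normalClosure K M (AlgebraicClosure M)
  let A := L ⊗[K] E
  have : Algebra.FormallyUnramified K E := .of_isSeparable K E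
  have : IsReduced A := Algebra.FormallyUnramified.isReduced_of_field L A
  have : IsArtinianRing A := isArtinian_of_tower L inferInstance
  obtain ⟨n, m, hA⟩ := IsArtinianRing.exists_algEquiv_pi_fin L A
  let (i : Fin n) : Field (A ⧸ (m i).asIdeal) := Ideal.Quotient.field _
  refine ⟨E, inferInstance, inferInstance, inferInstance, n, fun i ↦ A ⧸ (m i).asIdeal,
    inferInstance, inferInstance, hA, fun i ↦ ?_⟩
  exact nonempty_algHom_of_forall_minpoly_base_splits <| minpoly_map_splits_of_normal
    (IsScalarTower.toAlgHom K M E)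
    ((Ideal.Quotient.mkₐ K (m i).asIdeal).comp Algebra.TensorProduct.includeRight)
end

section
/- Let $S$ be a spectral topological space in which every quasi-compact open subset is closed (e.g., a profinite set), and let $F$ be a nonzero sheaf of $\mathbf{F}_p$-vector spaces on $S$. Then $H^0(S, F) \neq 0$. -/
/-!
A nonzero sheaf has a nonzero section `s` over some open `U`. Quasi-compact opens form a basis,
so by locality `s` stays nonzero on some quasi-compact open `V ⊆ U`. Such a `V` is clopen, hence
`S` is the disjoint union of the opens `V` and `Vᶜ`, and gluing `s|V` with `0` on `Vᶜ` yields a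
nonzero global section.
-/

universe u

open CategoryTheory TopologicalSpace Opposite

/-- A spectral topological space: quasi-compact, T0, quasi-sober, quasi-separated, with a
basis of quasi-compact open subsets. -/
def IsSpectralSpace (S : Type u) [TopologicalSpace S] : Prop :=
  CompactSpace S ∧ T0Space S ∧ QuasiSober S ∧ QuasiSeparatedSpace S ∧
    ∀ (x : S) (U : Opens S), x ∈ U → ∃ V : Opens S, IsCompact (V : Set S) ∧ x ∈ V ∧ V ≤ U

open Limits

theorem CategoryTheory.Sheaf.exists_ne_zero_of_not_isZero {C : Type*} [Category C]
    {J : GrothendieckTopology C} {R : Type*} [Ring R] {F : Sheaf J (ModuleCat R)}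
    (hF : ¬ IsZero F) : ∃ X, ∃ s : F.obj.obj X, s ≠ 0 := by
  contrapose! hF
  refine IsZero.of_full_of_faithful_of_isZero (sheafToPresheaf J _) F
    (Functor.isZero _ fun X => ModuleCat.isZero_iff_subsingleton.mpr ⟨fun a b => ?_⟩)
  rw [hF X a, hF X b]

namespace TopCat.Sheaf

variable {X : TopCat.{u}} {R : Type*} [Ring R] (F : X.Sheaf (ModuleCat.{u} R))

theorem exists_map_ne_zero_of_le_iSup {U : Opens X} {ι : Type*} (V : ι → Opens X)
    (hVU : ∀ i, V i ≤ U) (hU : U ≤ iSup V) {s : F.presheaf.obj (op U)} (hs : s ≠ 0) :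
    ∃ i, F.presheaf.map (homOfLE (hVU i)).op s ≠ 0 := by
  contrapose! hs
  refine F.eq_of_locally_eq' V U (fun i => homOfLE (hVU i)) hU s 0 fun i => ?_
  rw [hs i, map_zero]

theorem map_sup_left_surjective_of_inf_eq_bot {U V : Opens X} (h : U ⊓ V = ⊥) :
    Function.Surjective (F.presheaf.map (homOfLE le_sup_left : U ⟶ U ⊔ V).op) := by
  obtain ⟨l, hl, -⟩ := BinaryFan.IsLimit.lift' (F.isProductOfDisjoint U V h) (𝟙 _) 0
  exact fun s => ⟨l s, ConcreteCategory.congr_hom hl s⟩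

theorem map_top_surjective_of_isClosed {U : Opens X} (hU : IsClosed (U : Set X)) :
    Function.Surjective (F.presheaf.map (homOfLE le_top : U ⟶ ⊤).op) := by
  let W : Opens X := ⟨(U : Set X)ᶜ, hU.isOpen_compl⟩
  have hcover : ⊤ ≤ U ⊔ W := fun x _ => by by_cases hx : x ∈ U <;> simp [W, hx]
  intro s
  obtain ⟨t, ht⟩ := F.map_sup_left_surjective_of_inf_eq_bot (V := W) (by ext; simp [W]) s
  refine ⟨F.presheaf.map (homOfLE hcover).op t, ?_⟩
  rw [← ConcreteCategory.comp_apply, ← F.presheaf.map_comp]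
  exact ht

end TopCat.Sheaf

theorem IsSpectralSpace.le_iSup_isCompact {S : Type u} [TopologicalSpace S]
    (hS : IsSpectralSpace S) (U : Opens S) :
    U ≤ ⨆ V : {V : Opens S // IsCompact (V : Set S) ∧ V ≤ U}, V.1 := fun x hx => by
  obtain ⟨V, hVc, hxV, hVU⟩ := hS.2.2.2.2 x U hx
  exact Opens.mem_iSup.mpr ⟨⟨V, hVc, hVU⟩, hxV⟩

theorem global_sections_ne_zero_of_nonzero_sheaf_general
    (p : ℕ)
    (S : TopCat.{u}) (hspec : IsSpectralSpace S)
    (hqc : ∀ U : Opens S, IsCompact (U : Set S) → IsClosed (U : Set S))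
    (F : Sheaf (Opens.grothendieckTopology S) (ModuleCat.{u} (ZMod p)))
    (hF : ¬ Limits.IsZero F) :
    Nontrivial (F.val.obj (op ⊤)) := by
  obtain ⟨⟨U⟩, s, hs⟩ := F.exists_ne_zero_of_not_isZero hF
  obtain ⟨⟨V, hVc, hVU⟩, hsV⟩ := TopCat.Sheaf.exists_map_ne_zero_of_le_iSup F _
    (fun V => V.2.2) (hspec.le_iSup_isCompact U) hs
  obtain ⟨t, ht⟩ :=
    TopCat.Sheaf.map_top_surjective_of_isClosed F (hqc V hVc) (F.obj.map (homOfLE hVU).op s)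
  refine ⟨t, 0, fun ht0 => hsV ?_⟩
  rw [← ht, ht0, map_zero]

theorem global_sections_ne_zero_of_nonzero_sheaf
    (p : ℕ) (hp : p.Prime)
    (S : TopCat.{u}) (hspec : IsSpectralSpace S)
    (hqc : ∀ U : Opens S, IsCompact (U : Set S) → IsClosed (U : Set S))
    (F : Sheaf (Opens.grothendieckTopology S) (ModuleCat.{u} (ZMod p)))
    (hF : ¬ Limits.IsZero F) :
    Nontrivial (F.val.obj (op ⊤)) :=
  global_sections_ne_zero_of_nonzero_sheaf_general p S hspec hqc F hF
end

section
/- Let $R$ be a commutative ring and let $F$ be a set-valued functor on commutative $R$-algebras that commutes with filtered colimits and with finite products, and which is pointed (has a distinguished element $0$ in each value). If $F(S) = \{0\}$ for the coordinate ring $S$ of each connected component of $\operatorname{Spec}(R)$, then $F(R) = \{0\}$. -/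
/-!
Fix `x y ∈ F(R)`. For a point `p` of `Spec R`, the coordinate ring of its connected component is
the filtered colimit of the rings `R ⧸ (s)`, `s` a finite set of idempotents vanishing on the
component, and `(s)` is generated by a single idempotent. Since `F` commutes with filtered
colimits, `x` and `y` already agree in `F(R ⧸ (e_p))` for an idempotent `e_p ∈ p`. Finitely many
of the clopen sets `V(e_p)` cover `Spec R`, so the product of the corresponding `e_p` is `0`.
Agreement in `F(R ⧸ (e))` and `F(R ⧸ (f))` gives agreement in `F(R ⧸ (ef))`, because
`R ⧸ (ef) ≅ R ⧸ (e) × R ⧸ (f, 1 - e)` and `F` preserves finite products; hence `x = y` in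
`F(R ⧸ (0)) = F(R)`.
-/

universe u

open CategoryTheory

/-- The ideal cutting out the connected component of `p` in `Spec R`: it is generated by
the idempotents of `R` vanishing at every point of the connected component of `p`.  The
coordinate ring of the connected component of `p` is `R ⧸ componentIdeal R p`. -/
def componentIdeal (R : Type u) [CommRing R] (p : PrimeSpectrum R) : Ideal R :=
  Ideal.span {e : R | IsIdempotentElem e ∧
    ∀ q ∈ connectedComponent p, e ∈ PrimeSpectrum.asIdeal q}

open Limits

namespace Pointed

theorem isLimit_ext {J : Type*} [Category J] {K : J ⥤ Pointed.{u}} {c : Cone K} (hc : IsLimit c)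
    {x y : c.pt} (h : ∀ j, (c.π.app j).toFun x = (c.π.app j).toFun y) : x = y :=
  have := typeToPointedForgetAdjunction.rightAdjoint_preservesLimits
  Concrete.isLimit_ext K hc x y h

theorem exists_map_eq_of_isColimit {J : Type u} [SmallCategory J] [IsFiltered J]
    {K : J ⥤ Pointed.{u}} {c : Cocone K} (hc : IsColimit c) {j : J} {a b : K.obj j}
    (h : (c.ι.app j).toFun a = (c.ι.app j).toFun b) :
    ∃ (k : J) (f : j ⟶ k), (K.map f).toFun a = (K.map f).toFun b := by
  let K' := K ⋙ forget Pointed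
  have := IsFiltered.isConnected J
  -- `J` is connected, so all base points have the same image in the colimit of the sets
  obtain ⟨pt, hpt⟩ :=
    constant_of_preserves_morphisms' (fun i => colimit.ι K' i (K.obj i).point) fun _ _ f => by
      rw [← colimit.w_apply K' f]
      exact congrArg _ (K.map f).map_point
  let Q : Cocone K :=
    { pt := ⟨colimit K', pt⟩
      ι := { app i := ⟨colimit.ι K' i, hpt i⟩
             naturality _ _ f := Pointed.Hom.ext (funext (colimit.w_apply K' f)) } }
  have hfac (z : K.obj j) : (hc.desc Q).toFun ((c.ι.app j).toFun z) = colimit.ι K' j z :=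
    congrFun (congrArg Pointed.Hom.toFun (hc.fac Q j)) z
  have hQ : colimit.ι K' j a = colimit.ι K' j b :=
    (hfac a).symm.trans ((congrArg _ h).trans (hfac b))
  exact (Types.FilteredColimit.isColimit_eq_iff' (colimit.isColimit K') a b).1 hQ

end Pointed

section

variable {R : Type u} [CommRing R]

abbrev quotientUnder (I : Ideal R) : Under (CommRingCat.of R) :=
  Under.mk (CommRingCat.ofHom (Ideal.Quotient.mk I))

theorem quotientUnder_hom_ext {I : Ideal R} {A : Under (CommRingCat.of R)}
    {f g : quotientUnder I ⟶ A} : f = g := by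
  ext x
  obtain ⟨r, rfl⟩ := Ideal.Quotient.mk_surjective x
  exact (congrArg (fun φ => φ.hom r) (Under.w f)).trans
    (congrArg (fun φ => φ.hom r) (Under.w g)).symm

def quotientUnderMap {I J : Ideal R} (h : I ≤ J) : quotientUnder I ⟶ quotientUnder J :=
  Under.homMk (CommRingCat.ofHom (Ideal.Quotient.factor h)) rfl

section Colimit

variable {ι : Type*} [Preorder ι] {I : ι → Ideal R} (hI : Monotone I)

def quotientDiagram : ι ⥤ Under (CommRingCat.of R) where
  obj i := quotientUnder (I i)
  map f := quotientUnderMap (hI f.le)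
  map_id _ := quotientUnder_hom_ext
  map_comp _ _ := quotientUnder_hom_ext

def quotientCocone {J : Ideal R} (hJ : ⨆ i, I i = J) : Cocone (quotientDiagram hI) where
  pt := quotientUnder J
  ι :=
    { app i := quotientUnderMap (hJ ▸ le_iSup I i)
      naturality _ _ _ := quotientUnder_hom_ext }

def isColimitQuotientCocone {J : Ideal R} (hJ : ⨆ i, I i = J) :
    IsColimit (quotientCocone hI hJ) where
  desc s := Under.homMk (CommRingCat.ofHom (Ideal.Quotient.lift J s.pt.hom.hom fun r hr => by
    refine (iSup_le fun i r hr => ?_ : ⨆ i, I i ≤ RingHom.ker s.pt.hom.hom) (hJ ▸ hr)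
    calc s.pt.hom r = (s.ι.app i).right (Ideal.Quotient.mk (I i) r) :=
          (congrArg (fun φ => φ.hom r) (Under.w (s.ι.app i))).symm
      _ = 0 := (congrArg _ (Ideal.Quotient.eq_zero_iff_mem.2 hr)).trans (map_zero _))) rfl
  fac _ _ := quotientUnder_hom_ext
  uniq _ _ _ := quotientUnder_hom_ext

end Colimit

theorem Ideal.iSup_span_finset (S : Set R) :
    ⨆ s : Finset S, Ideal.span (Subtype.val '' (s : Set S)) = Ideal.span S := by
  rw [← Ideal.span_iUnion]
  congr
  ext e
  simp only [Set.mem_iUnion, Set.mem_image, Finset.mem_coe, Subtype.exists, exists_and_right,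
    exists_eq_right]
  exact ⟨fun ⟨_, he, _⟩ => he,
    fun he => ⟨{⟨e, he⟩}, he, Finset.mem_singleton_self _⟩⟩

def quotientUnderBotHom : quotientUnder (⊥ : Ideal R) ⟶ Under.mk (𝟙 (CommRingCat.of R)) :=
  Under.homMk (CommRingCat.ofHom (RingEquiv.quotientBot R).toRingHom) rfl

def isTerminalQuotientUnderTop : IsTerminal (quotientUnder (⊤ : Ideal R)) :=
  have : Subsingleton (R ⧸ (⊤ : Ideal R)) := Ideal.Quotient.subsingleton_iff.2 rfl
  IsTerminal.ofUniqueHom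
    (fun _ => Under.homMk (CommRingCat.ofHom
      { toFun := 0
        map_one' := Subsingleton.elim _ _
        map_mul' _ _ := Subsingleton.elim _ _
        map_zero' := rfl
        map_add' _ _ := Subsingleton.elim _ _ })
      (by ext; exact Subsingleton.elim (α := R ⧸ ⊤) _ _))
    fun _ _ => by ext; exact Subsingleton.elim (α := R ⧸ ⊤) _ _

noncomputable def isLimitQuotientInfFan {I J : Ideal R} (h : IsCoprime I J) :
    IsLimit (BinaryFan.mk (quotientUnderMap (inf_le_left : I ⊓ J ≤ I))
      (quotientUnderMap inf_le_right)) :=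
  let e := Ideal.quotientInfEquivQuotientProd I J h
  have e_fst (z) : (e z).1 = Ideal.Quotient.factor inf_le_left z :=
    Ideal.quotientInfEquivQuotientProd_fst I J h z
  have e_snd (z) : (e z).2 = Ideal.Quotient.factor inf_le_right z :=
    Ideal.quotientInfEquivQuotientProd_snd I J h z
  BinaryFan.IsLimit.mk _
    (fun f g => Under.homMk
      (CommRingCat.ofHom (e.symm.toRingHom.comp (f.right.hom.prod g.right.hom))) (by
        ext r
        refine e.symm_apply_eq.2 (Prod.ext ?_ ?_)
        · exact (congrArg (fun φ => φ.hom r) (Under.w f)).trans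
            (e_fst (Ideal.Quotient.mk _ r)).symm
        · exact (congrArg (fun φ => φ.hom r) (Under.w g)).trans
            (e_snd (Ideal.Quotient.mk _ r)).symm))
    (fun f g => by ext x; exact (e_fst _).symm.trans (congrArg Prod.fst (e.apply_symm_apply _)))
    (fun f g => by ext x; exact (e_snd _).symm.trans (congrArg Prod.snd (e.apply_symm_apply _)))
    (fun f g m hf hg => by
      subst hf hg
      ext x
      exact e.eq_symm_apply.2 (Prod.ext (e_fst _) (e_snd _)))

namespace Ideal

theorem isIdempotentElem_span {s : Set R} (hs : ∀ e ∈ s, IsIdempotentElem e) :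
    IsIdempotentElem (span s) :=
  le_antisymm mul_le_right <| span_le.2 fun e he =>
    (hs e he).eq ▸ mul_mem_mul (subset_span he) (subset_span he)

theorem isCoprime_span_singleton_sup (e : R) (J : Ideal R) :
    IsCoprime (span {e}) (J ⊔ span {1 - e}) := by
  rw [isCoprime_iff_sup_eq, eq_top_iff_one]
  simpa using add_mem (mem_sup_left (mem_span_singleton_self e))
    (mem_sup_right (mem_sup_right (mem_span_singleton_self (1 - e))))

theorem span_singleton_mul_eq_inf {e : R} (he : IsIdempotentElem e) (f : R) :
    span {e * f} = span {e} ⊓ (span {f} ⊔ span {1 - e}) := by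
  rw [← mul_eq_inf_of_isCoprime (isCoprime_span_singleton_sup e _), mul_sup,
    span_singleton_mul_span_singleton, span_singleton_mul_span_singleton, mul_sub, mul_one, he.eq,
    sub_self, span_singleton_eq_bot.2 rfl, sup_bot_eq]

end Ideal

theorem PrimeSpectrum.exists_finset_prod_eq_zero {e : PrimeSpectrum R → R}
    (he : ∀ p, IsIdempotentElem (e p)) (hmem : ∀ p, e p ∈ p.asIdeal) :
    ∃ t : Finset (PrimeSpectrum R), ∏ p ∈ t, e p = 0 := by
  obtain ⟨t, ht⟩ := isCompact_univ.elim_finite_subcover (fun p => zeroLocus {e p})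
    (fun p => zeroLocus_eq_basicOpen_of_isIdempotentElem _ (he p) ▸ (basicOpen _).isOpen)
    fun q _ => Set.mem_iUnion.2 ⟨q, by simpa using hmem q⟩
  have ht_idem : IsIdempotentElem (∏ p ∈ t, e p) :=
    Finset.prod_induction _ _ (fun _ _ => IsIdempotentElem.mul) .one fun p _ => he p
  refine ⟨t, ht_idem.eq_zero_of_isNilpotent <| nilpotent_iff_mem_prime.2 fun J hJ => ?_⟩
  obtain ⟨p, hp, hJp⟩ := Set.mem_iUnion₂.1 (ht (Set.mem_univ ⟨J, hJ⟩))
  exact Ideal.mem_of_dvd _ (Finset.dvd_prod_of_mem e hp) (by simpa using hJp)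

section AgreeOn

variable (F : Under (CommRingCat.of R) ⥤ Pointed.{u})
  (x y : F.obj (Under.mk (𝟙 (CommRingCat.of R))))

def AgreeOn (A : Under (CommRingCat.of R)) : Prop :=
  (F.map (Under.mkIdInitial.to A)).toFun x = (F.map (Under.mkIdInitial.to A)).toFun y

variable {F x y}

theorem map_toFun_map_mkIdInitial_to {A B : Under (CommRingCat.of R)} (f : A ⟶ B)
    (z : F.obj (Under.mk (𝟙 (CommRingCat.of R)))) :
    (F.map f).toFun ((F.map (Under.mkIdInitial.to A)).toFun z) =
      (F.map (Under.mkIdInitial.to B)).toFun z := by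
  rw [← Under.mkIdInitial.to_comp f, F.map_comp]
  rfl

theorem AgreeOn.map {A B : Under (CommRingCat.of R)} (f : A ⟶ B) (h : AgreeOn F x y A) :
    AgreeOn F x y B := by
  rw [AgreeOn, ← map_toFun_map_mkIdInitial_to f, ← map_toFun_map_mkIdInitial_to f, h]

theorem eq_of_agreeOn_quotientUnder_bot (h : AgreeOn F x y (quotientUnder ⊥)) : x = y := by
  have := h.map quotientUnderBotHom
  rwa [AgreeOn, Under.mkIdInitial.hom_ext (Under.mkIdInitial.to _) (𝟙 _), F.map_id] at this

theorem agreeOn_of_isLimit {J : Type*} [Category J] {D : J ⥤ Under (CommRingCat.of R)}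
    {c : Cone D} (hc : IsLimit c) [PreservesLimit D F] (h : ∀ j, AgreeOn F x y (D.obj j)) :
    AgreeOn F x y c.pt :=
  Pointed.isLimit_ext (isLimitOfPreserves F hc) fun j => by
    rw [Functor.mapCone_π_app, map_toFun_map_mkIdInitial_to, map_toFun_map_mkIdInitial_to]
    exact h j

theorem exists_agreeOn_of_isColimit {J : Type u} [SmallCategory J] [IsFiltered J]
    {D : J ⥤ Under (CommRingCat.of R)} {c : Cocone D} (hc : IsColimit c) [PreservesColimit D F]
    (h : AgreeOn F x y c.pt) : ∃ j, AgreeOn F x y (D.obj j) := by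
  obtain ⟨j⟩ := IsFiltered.nonempty (C := J)
  obtain ⟨k, f, hk⟩ := Pointed.exists_map_eq_of_isColimit (isColimitOfPreserves F hc)
    (a := (F.map (Under.mkIdInitial.to (D.obj j))).toFun x)
    (b := (F.map (Under.mkIdInitial.to (D.obj j))).toFun y)
    (by
      rw [Functor.mapCocone_ι_app, map_toFun_map_mkIdInitial_to, map_toFun_map_mkIdInitial_to]
      exact h)
  rw [Functor.comp_map, map_toFun_map_mkIdInitial_to, map_toFun_map_mkIdInitial_to] at hk
  exact ⟨k, hk⟩

theorem agreeOn_quotientUnder_top [PreservesFiniteProducts F] :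
    AgreeOn F x y (quotientUnder ⊤) :=
  agreeOn_of_isLimit isTerminalQuotientUnderTop fun j => j.as.elim

theorem AgreeOn.quotientUnder_inf [PreservesFiniteProducts F] {I J : Ideal R}
    (hIJ : IsCoprime I J) (hI : AgreeOn F x y (quotientUnder I))
    (hJ : AgreeOn F x y (quotientUnder J)) : AgreeOn F x y (quotientUnder (I ⊓ J)) :=
  agreeOn_of_isLimit (isLimitQuotientInfFan hIJ) (by rintro ⟨_ | _⟩ <;> assumption)

theorem agreeOn_quotientUnder_span_prod [PreservesFiniteProducts F] {ι : Type*} (t : Finset ι)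
    {e : ι → R} (he : ∀ i ∈ t, IsIdempotentElem (e i))
    (h : ∀ i ∈ t, AgreeOn F x y (quotientUnder (Ideal.span {e i}))) :
    AgreeOn F x y (quotientUnder (Ideal.span {∏ i ∈ t, e i})) := by
  refine (Finset.prod_induction e
    (fun a => IsIdempotentElem a ∧ AgreeOn F x y (quotientUnder (Ideal.span {a})))
    (fun a b ha hb => ⟨ha.1.mul hb.1, ?_⟩) ⟨.one, ?_⟩ fun i hi => ⟨he i hi, h i hi⟩).2
  · rw [Ideal.span_singleton_mul_eq_inf ha.1]
    exact ha.2.quotientUnder_inf (Ideal.isCoprime_span_singleton_sup _ _)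
      (hb.2.map (quotientUnderMap le_sup_left))
  · rw [Ideal.span_singleton_one]
    exact agreeOn_quotientUnder_top

theorem AgreeOn.exists_isIdempotentElem_of_componentIdeal [PreservesFilteredColimits F]
    (p : PrimeSpectrum R) (h : AgreeOn F x y (quotientUnder (componentIdeal R p))) :
    ∃ e, IsIdempotentElem e ∧ e ∈ p.asIdeal ∧
      AgreeOn F x y (quotientUnder (Ideal.span {e})) := by
  set S := {e : R | IsIdempotentElem e ∧ ∀ q ∈ connectedComponent p, e ∈ q.asIdeal}
  have hmono : Monotone fun s : Finset S => Ideal.span (Subtype.val '' (s : Set S)) :=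
    fun s t hst => Ideal.span_mono (Set.image_mono (Finset.coe_subset.2 hst))
  obtain ⟨s, hs⟩ := exists_agreeOn_of_isColimit
    (isColimitQuotientCocone hmono (J := componentIdeal R p) (Ideal.iSup_span_finset S)) h
  obtain ⟨e, he, hspan : Ideal.span _ = Ideal.span {e}⟩ :=
    (Ideal.isIdempotentElem_iff_of_fg _ (Submodule.fg_span (s.finite_toSet.image _))).1
      (Ideal.isIdempotentElem_span (by rintro _ ⟨e, -, rfl⟩; exact e.2.1))
  change AgreeOn F x y (quotientUnder (Ideal.span _)) at hs
  rw [hspan] at hs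
  have hle : Ideal.span (Subtype.val '' (s : Set S)) ≤ p.asIdeal :=
    Ideal.span_le.2 (by rintro _ ⟨e, -, rfl⟩; exact e.2.2 p mem_connectedComponent)
  exact ⟨e, he, hle (hspan ▸ Ideal.mem_span_singleton_self e), hs⟩

end AgreeOn

end

theorem trivial_of_trivial_on_connected_components
    (R : Type u) [CommRing R]
    (F : Under (CommRingCat.of R) ⥤ Pointed.{u})
    [Limits.PreservesFilteredColimits F] [Limits.PreservesFiniteProducts F]
    (hcomp : ∀ p : PrimeSpectrum R,
      Subsingleton ((F.obj (Under.mk (CommRingCat.ofHom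
        (Ideal.Quotient.mk (componentIdeal R p))))).X)) :
    Subsingleton ((F.obj (Under.mk (𝟙 (CommRingCat.of R)))).X) := by
  refine ⟨fun x y => eq_of_agreeOn_quotientUnder_bot ?_⟩
  choose e he_idem he_mem he_agree using fun p =>
    AgreeOn.exists_isIdempotentElem_of_componentIdeal (x := x) (y := y) p ((hcomp p).elim _ _)
  obtain ⟨t, ht⟩ := PrimeSpectrum.exists_finset_prod_eq_zero he_idem he_mem
  simpa [ht] using agreeOn_quotientUnder_span_prod t (fun p _ => he_idem p) fun p _ => he_agree p
end
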